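/- For every Q ∈ 𝒬, the inner product of the variogram with the weight matrix equals d − 1, i.e. ⟨Γ(Q), Q⟩ = ∑_{i<j} Γ(Q)_{ij} Q_{ij} = d − 1. -/
import Mathlib


open Matrix Finset

/-- `Θ(Q)`: `Θ(Q)_{ij} = −Q_{ij}` for `i ≠ j` and `Θ(Q)_{ii} = ∑_{j≠i} Q_{ij}`. -/
noncomputable def thetaOf {d : ℕ} (Q : Matrix (Fin d) (Fin d) ℝ) :
    Matrix (Fin d) (Fin d) ℝ :=
  Matrix.of fun i j => if i = j then ∑ l ∈ univ.filter (fun l => l ≠ i), Q i l else -Q i j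

/-- Membership in `𝒬`: symmetric, zero diagonal, and `xᵀΘ(Q)x > 0` for every nonzero
`x` with `∑ᵢ xᵢ = 0`. -/
def memQ {d : ℕ} (Q : Matrix (Fin d) (Fin d) ℝ) : Prop :=
  Q.IsSymm ∧ (∀ i, Q i i = 0) ∧
    ∀ x : Fin d → ℝ, x ≠ 0 → (∑ i, x i) = 0 → 0 < x ⬝ᵥ (thetaOf Q).mulVec x

/-- The centering matrix `P = I − (1/d)𝟙𝟙ᵀ`. -/
noncomputable def Pmat (d : ℕ) : Matrix (Fin d) (Fin d) ℝ :=
  1 - ((d : ℝ)⁻¹) • Matrix.of (fun _ _ : Fin d => (1 : ℝ))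

/-- `S` is the matrix `Σ(Q)`: the unique symmetric matrix with `Σ(Q)𝟙 = 0` and
`Θ(Q)Σ(Q) = P`. -/
def isSigmaOf {d : ℕ} (Q S : Matrix (Fin d) (Fin d) ℝ) : Prop :=
  S.IsSymm ∧ S.mulVec (fun _ => 1) = 0 ∧ thetaOf Q * S = Pmat d

/-- The variogram associated with `Σ`: `Γ_{ij} = Σ_{ii} + Σ_{jj} − 2Σ_{ij}`. -/
noncomputable def gammaOf {d : ℕ} (S : Matrix (Fin d) (Fin d) ℝ) :
    Matrix (Fin d) (Fin d) ℝ :=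
  Matrix.of fun i j => S i i + S j j - 2 * S i j

/-- The inner product `⟨A, B⟩ = ∑_{i<j} A_{ij} B_{ij}` on symmetric matrices with
zero diagonal. -/
noncomputable def sinner {d : ℕ} (A B : Matrix (Fin d) (Fin d) ℝ) : ℝ :=
  ∑ p ∈ univ.filter (fun p : Fin d × Fin d => p.1 < p.2), A p.1 p.2 * B p.1 p.2

open Classical in
/-- The spanning tree polynomial `τ(Q) = ∑_T ∏_{{i,j}∈T} Q_{ij}`, summed over all
spanning trees of the complete graph on `{1, …, d}`. -/
noncomputable def tau {d : ℕ} (Q : Matrix (Fin d) (Fin d) ℝ) : ℝ :=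
  ∑ T ∈ (univ : Finset (SimpleGraph (Fin d))).filter (fun T => T.IsTree),
    ∏ p ∈ univ.filter (fun p : Fin d × Fin d => p.1 < p.2 ∧ T.Adj p.1 p.2), Q p.1 p.2

/-- The Cayley–Menger matrix of `Γ`. -/
noncomputable def CM {d : ℕ} (Γ : Matrix (Fin d) (Fin d) ℝ) :
    Matrix (Fin (d + 1)) (Fin (d + 1)) ℝ :=
  Matrix.of fun a b =>
    if ha : (a : ℕ) < d then
      (if hb : (b : ℕ) < d then -Γ ⟨a, ha⟩ ⟨b, hb⟩ / 2 else 1)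
    else (if (b : ℕ) < d then -1 else 0)

/-- Membership in the cone `𝒞^d` of symmetric matrices with zero diagonal that are
strictly conditionally negative definite. -/
def memC {d : ℕ} (Γ : Matrix (Fin d) (Fin d) ℝ) : Prop :=
  Γ.IsSymm ∧ (∀ i, Γ i i = 0) ∧
    ∀ x : Fin d → ℝ, x ≠ 0 → (∑ i, x i) = 0 → x ⬝ᵥ Γ.mulVec x < 0
/-- For every `Q ∈ 𝒬` one has `⟨Γ(Q), Q⟩ = d − 1`. -/
theorem sinner_variogram_weights {d : ℕ} (hd : 0 < d)
    (Q S : Matrix (Fin d) (Fin d) ℝ)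
    (hQ : memQ Q) (hS : isSigmaOf Q S) :
    sinner (gammaOf S) Q = (d : ℝ) - 1 := by
  obtain ⟨hQsymm, hQdiag, -⟩ := hQ
  obtain ⟨hSsymm, -, hTS⟩ := hS
  have hS' : ∀ i j, S j i = S i j := fun i j => hSsymm.apply i j
  have hQ' : ∀ i j, Q j i = Q i j := fun i j => hQsymm.apply i j
  set g : Fin d → Fin d → ℝ := fun i j => (S i i - S i j) * Q i j with hg
  -- trace computation
  have htr : ∑ i, ∑ j ∈ univ.erase i, g i j = (d : ℝ) - 1 := by
    have h1 : Matrix.trace (thetaOf Q * S) = Matrix.trace (Pmat d) := by rw [hTS]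
    have h2 : Matrix.trace (Pmat d) = (d : ℝ) - 1 := by
      have hd' : (d : ℝ) ≠ 0 := Nat.cast_ne_zero.mpr hd.ne'
      simp [Pmat, Matrix.trace, Matrix.diag, Matrix.one_apply, Finset.sum_sub_distrib,
        mul_comm]
      field_simp
    have h3 : Matrix.trace (thetaOf Q * S) = ∑ i, ∑ j ∈ univ.erase i, g i j := by
      rw [Matrix.trace]
      refine Finset.sum_congr rfl fun i _ => ?_
      rw [Matrix.diag, Matrix.mul_apply,
        ← Finset.add_sum_erase _ (fun j => thetaOf Q i j * S j i) (Finset.mem_univ i)]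
      have hdiag : thetaOf Q i i * S i i
          = ∑ j ∈ univ.erase i, Q i j * S i i := by
        simp only [thetaOf, Matrix.of_apply, if_pos rfl, if_true]
        rw [Finset.sum_mul, Finset.filter_ne']
      rw [hdiag, ← Finset.sum_add_distrib]
      refine Finset.sum_congr rfl fun j hj => ?_
      have hji : j ≠ i := (Finset.mem_erase.mp hj).1
      simp only [thetaOf, Matrix.of_apply, if_neg (Ne.symm hji), hg, hS' i j]
      ring
    rw [h1, h2] at h3
    exact h3.symm
  -- relate the double sum to a sum over ordered pairs
  have e1 : (∑ i, ∑ j ∈ univ.erase i, g i j)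
      = ∑ p ∈ (univ : Finset (Fin d × Fin d)).filter (fun p => p.1 ≠ p.2), g p.1 p.2 := by
    rw [Finset.sum_filter, Fintype.sum_prod_type]
    refine Finset.sum_congr rfl fun i _ => ?_
    rw [← Finset.sum_filter]
    congr 1
    ext j
    simp [Finset.mem_erase, ne_comm]
  have e2 : (∑ p ∈ (univ : Finset (Fin d × Fin d)).filter (fun p => p.1 ≠ p.2), g p.1 p.2)
      = (∑ p ∈ univ.filter (fun p : Fin d × Fin d => p.1 < p.2), g p.1 p.2)
        + ∑ p ∈ univ.filter (fun p : Fin d × Fin d => p.2 < p.1), g p.1 p.2 := by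
    rw [← Finset.sum_filter_add_sum_filter_not
      ((univ : Finset (Fin d × Fin d)).filter (fun p => p.1 ≠ p.2))
      (fun p => p.1 < p.2) (fun p => g p.1 p.2)]
    congr 1
    · congr 1
      ext p
      simp only [Finset.mem_filter, Finset.mem_univ, true_and]
      constructor
      · exact fun h => h.2
      · exact fun h => ⟨ne_of_lt h, h⟩
    · congr 1
      ext p
      simp only [Finset.mem_filter, Finset.mem_univ, true_and, not_lt]
      constructor
      · exact fun h => lt_of_le_of_ne h.2 (Ne.symm h.1)
      · exact fun h => ⟨ne_of_gt h, le_of_lt h⟩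
  have e3 : (∑ p ∈ univ.filter (fun p : Fin d × Fin d => p.2 < p.1), g p.1 p.2)
      = ∑ p ∈ univ.filter (fun p : Fin d × Fin d => p.1 < p.2), g p.2 p.1 := by
    refine Finset.sum_nbij' (fun p => Prod.swap p) (fun p => Prod.swap p) ?_ ?_ ?_ ?_ ?_
    · intro p hp; simp only [Finset.mem_filter, Finset.mem_univ, true_and] at *; exact hp
    · intro p hp; simp only [Finset.mem_filter, Finset.mem_univ, true_and] at *; exact hp
    · intro p _; simp
    · intro p _; simp
    · intro p _; simp
  -- sinner equals the sum of g p.1 p.2 + g p.2 p.1 over i < j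
  have e4 : sinner (gammaOf S) Q
      = ∑ p ∈ univ.filter (fun p : Fin d × Fin d => p.1 < p.2), (g p.1 p.2 + g p.2 p.1) := by
    refine Finset.sum_congr rfl fun p _ => ?_
    simp only [gammaOf, Matrix.of_apply, hg, hS' p.1 p.2, hQ' p.1 p.2]
    ring
  rw [e4, Finset.sum_add_distrib, ← e3, ← e2, ← e1, htr]
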